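/- Let G be a connected bipartite graph with bipartition V1 ∪ V2, with |V1|, |V2| ≥ 2, such that G has no vertex of degree 1, and with N_G(x) ≠ V2 for all x ∈ V1 and N_G(y) ≠ V1 for all y ∈ V2. Then every vertex of G lying on a cycle of G is a shedding vertex of the complement graph Ḡ. -/

import Mathlib

/-!
Independent sets of `Ḡ` are cliques of `G`, and a bipartite graph is triangle-free. So an
independent set of `Ḡ` missing `N_Ḡ[v]` is a clique inside `N_G(v)`, hence empty or a single
`G`-neighbour `u` of `v`. In the first case any non-neighbour of `v` other than `v` extends it;
such a vertex exists because `N_G(v)` is not the whole opposite side. In the second case a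
further `G`-neighbour `x ≠ v` of `u` (which exists as `deg u ≥ 2`) extends it, since `x` is
not adjacent to `v` by triangle-freeness.
-/

open SimpleGraph

variable {V : Type*}

/-- `S` is an independent set of `G`: no two (distinct) members are adjacent. -/
def IsIndepOn (G : SimpleGraph V) (S : Set V) : Prop :=
  S.Pairwise fun u w => ¬ G.Adj u w

/-- The closed neighborhood `N_G[v]` of `v` in `G`. -/
def closedNbhd (G : SimpleGraph V) (v : V) : Set V :=
  {u | G.Adj v u} ∪ {v}

/-- Vertex decomposability of the independence complex of the induced subgraph of `G`
on the vertex set `A`. -/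
inductive VertexDecomp (G : SimpleGraph V) : Set V → Prop
  | discrete (A : Set V) (h : ∀ u ∈ A, ∀ w ∈ A, ¬ G.Adj u w) : VertexDecomp G A
  | shed (A : Set V) (v : V) (hv : v ∈ A)
      (hshed : ∀ S : Set V, S ⊆ A \ closedNbhd G v → IsIndepOn G S →
        ∃ x ∈ A, G.Adj v x ∧ IsIndepOn G (insert x S))
      (hdel : VertexDecomp G (A \ {v}))
      (hlink : VertexDecomp G (A \ closedNbhd G v)) : VertexDecomp G A

/-- `v` is a shedding vertex of `H`: every independent set avoiding `N_H[v]` can be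
extended by a neighbor of `v` to an independent set of `H \ {v}`. -/
def IsSheddingVertex (H : SimpleGraph V) (v : V) : Prop :=
  ∀ S : Set V, S ∩ closedNbhd H v = ∅ → IsIndepOn H S →
    ∃ x, H.Adj v x ∧ IsIndepOn H (insert x S)

section Complement

variable {G : SimpleGraph V}

lemma isIndepOn_compl_iff {S : Set V} : IsIndepOn Gᶜ S ↔ G.IsClique S :=
  isIndepSet_compl G

lemma subset_neighborSet_of_inter_closedNbhd_compl_eq_empty {v : V} {S : Set V}
    (hS : S ∩ closedNbhd Gᶜ v = ∅) : S ⊆ G.neighborSet v := by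
  intro u hu
  by_contra hvu
  have hmem : u ∈ closedNbhd Gᶜ v := by
    by_cases huv : u = v
    · exact Or.inr huv
    · exact Or.inl ⟨Ne.symm huv, hvu⟩
  exact Set.eq_empty_iff_forall_notMem.mp hS u ⟨hu, hmem⟩

theorem isSheddingVertex_compl_of_cliqueFree_three (hG : G.CliqueFree 3) {v : V}
    (hv : ∃ y, Gᶜ.Adj v y) (hext : ∀ u, G.Adj v u → ∃ x, G.Adj u x ∧ x ≠ v) :
    IsSheddingVertex Gᶜ v := by
  intro S hS hSind
  have hSN := subset_neighborSet_of_inter_closedNbhd_compl_eq_empty hS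
  have hnbhd := isIndepSet_neighborSet_of_triangleFree G hG v
  have hSsub : S.Subsingleton := fun u hu w hw => by
    by_contra huw
    exact hnbhd (hSN hu) (hSN hw) huw (isIndepOn_compl_iff.mp hSind hu hw huw)
  obtain rfl | ⟨u, rfl⟩ := hSsub.eq_empty_or_singleton
  · obtain ⟨y, hy⟩ := hv
    exact ⟨y, hy, by simp [IsIndepOn]⟩
  · have hvu : G.Adj v u := hSN (Set.mem_singleton u)
    obtain ⟨x, hux, hxv⟩ := hext u hvu
    have hvx : ¬ G.Adj v x := fun hvx => hnbhd hvu hvx hux.ne hux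
    exact ⟨x, ⟨hxv.symm, hvx⟩, isIndepOn_compl_iff.mpr (isClique_pair.mpr fun _ => hux.symm)⟩

lemma exists_compl_adj_of_neighborSet_ssubset {v : V} {W : Set V} (hvW : v ∉ W)
    (hsub : G.neighborSet v ⊆ W) (hne : G.neighborSet v ≠ W) : ∃ y, Gᶜ.Adj v y := by
  obtain ⟨y, hyW, hy⟩ := Set.exists_of_ssubset (hsub.ssubset_of_ne hne)
  exact ⟨y, (compl_adj G v y).mpr ⟨fun h => hvW (h ▸ hyW), hy⟩⟩

lemma exists_adj_ne_of_degree_ne_one {u v : V} [Fintype (G.neighborSet u)] (huv : G.Adj u v)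
    (hdeg : G.degree u ≠ 1) : ∃ x, G.Adj u x ∧ x ≠ v := by
  have hpos : 0 < G.degree u := (G.degree_pos_iff_exists_adj u).mpr ⟨v, huv⟩
  obtain ⟨x, hx, hxv⟩ := Finset.exists_mem_ne (by omega : 1 < G.degree u) v
  exact ⟨x, (G.mem_neighborFinset u x).mp hx, hxv⟩

end Complement

section Bipartite

variable {G : SimpleGraph V} {V1 V2 : Set V}

lemma neighborSet_subset_of_mem_left (hdisj : Disjoint V1 V2)
    (hbip : ∀ u w, G.Adj u w → (u ∈ V1 ∧ w ∈ V2) ∨ (u ∈ V2 ∧ w ∈ V1)) {v : V} (hv : v ∈ V1) :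
    G.neighborSet v ⊆ V2 := by
  intro w hw
  rcases hbip v w hw with ⟨_, hw2⟩ | ⟨hv2, _⟩
  · exact hw2
  · exact absurd hv2 (Set.disjoint_left.mp hdisj hv)

lemma cliqueFree_three_of_bipartite (hdisj : Disjoint V1 V2)
    (hbip : ∀ u w, G.Adj u w → (u ∈ V1 ∧ w ∈ V2) ∨ (u ∈ V2 ∧ w ∈ V1)) : G.CliqueFree 3 := by
  classical
  let c : G.Coloring Bool := Coloring.mk (fun v => decide (v ∈ V1)) fun {u w} huw => by
    rcases hbip u w huw with ⟨hu, hw⟩ | ⟨hu, hw⟩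
    · simp [hu, Set.disjoint_right.mp hdisj hw]
    · simp [hw, Set.disjoint_right.mp hdisj hu]
  exact c.colorable.cliqueFree (by simp)

end Bipartite

theorem cycle_vertex_is_shedding_of_complement_general {V : Type*} [Fintype V]
    (G : SimpleGraph V) [DecidableRel G.Adj] (V1 V2 : Set V)
    (hunion : V1 ∪ V2 = Set.univ) (hdisj : Disjoint V1 V2)
    (hbip : ∀ u w, G.Adj u w → (u ∈ V1 ∧ w ∈ V2) ∨ (u ∈ V2 ∧ w ∈ V1))
    (hdeg : ∀ v, G.degree v ≠ 1)
    (hnbV2 : ∀ x ∈ V1, G.neighborSet x ≠ V2)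
    (hnbV1 : ∀ y ∈ V2, G.neighborSet y ≠ V1) :
    ∀ v : V, (∃ c : G.Walk v v, c.IsCycle) → IsSheddingVertex Gᶜ v := by
  intro v _
  have hbip' : ∀ u w, G.Adj u w → (u ∈ V2 ∧ w ∈ V1) ∨ (u ∈ V1 ∧ w ∈ V2) :=
    fun u w h => (hbip u w h).symm
  refine isSheddingVertex_compl_of_cliqueFree_three (cliqueFree_three_of_bipartite hdisj hbip) ?_
    fun u hvu => exists_adj_ne_of_degree_ne_one hvu.symm (hdeg u)
  rcases Set.eq_univ_iff_forall.mp hunion v with hv | hv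
  · exact exists_compl_adj_of_neighborSet_ssubset (Set.disjoint_left.mp hdisj hv)
      (neighborSet_subset_of_mem_left hdisj hbip hv) (hnbV2 v hv)
  · exact exists_compl_adj_of_neighborSet_ssubset (Set.disjoint_right.mp hdisj hv)
      (neighborSet_subset_of_mem_left hdisj.symm hbip' hv) (hnbV1 v hv)

theorem cycle_vertex_is_shedding_of_complement {V : Type*} [Fintype V]
    (G : SimpleGraph V) [DecidableRel G.Adj] (V1 V2 : Set V)
    (hunion : V1 ∪ V2 = Set.univ) (hdisj : Disjoint V1 V2)
    (hbip : ∀ u w, G.Adj u w → (u ∈ V1 ∧ w ∈ V2) ∨ (u ∈ V2 ∧ w ∈ V1))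
    (hconn : G.Connected)
    (hV1 : 2 ≤ V1.ncard) (hV2 : 2 ≤ V2.ncard)
    (hdeg : ∀ v, G.degree v ≠ 1)
    (hnbV2 : ∀ x ∈ V1, G.neighborSet x ≠ V2)
    (hnbV1 : ∀ y ∈ V2, G.neighborSet y ≠ V1) :
    ∀ v : V, (∃ c : G.Walk v v, c.IsCycle) → IsSheddingVertex Gᶜ v :=
  cycle_vertex_is_shedding_of_complement_general G V1 V2 hunion hdisj hbip hdeg hnbV2 hnbV1
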